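/- arXiv:2302.13081 — 9 statements merged into one kernel-verified Lean document; each statement's English description precedes it below -/
import Mathlib

section
/- Let S' be an isolated suborder of a partially ordered set (S,≤). Then the equivalence relation ≡_{S'} is order generating: the quotient relation ≤_{S'} on the set of equivalence classes of ≡_{S'}, defined by A ≤_{S'} B iff there exist a ∈ A and b ∈ B with a ≤ b, is a partial order (in particular it is antisymmetric: if A ≤_{S'} B and B ≤_{S'} A then A = B). -/
/-- `S'` is an *isolated suborder* of the partially ordered set: it has a least and a
greatest element, and for `x ∉ S'`, `y ∈ S'` we have `y ≤ x → ⊤_{S'} ≤ x` and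
`x ≤ y → x ≤ ⊥_{S'}`. -/
def IsIsolatedSuborder {α : Type*} [PartialOrder α] (S' : Set α) : Prop :=
  ∃ b t, IsLeast S' b ∧ IsGreatest S' t ∧
    ∀ x ∉ S', ∀ y ∈ S', (y ≤ x → t ≤ x) ∧ (x ≤ y → x ≤ b)

/-- The equivalence class of `x` under `≡_{S'}`: it is `S'` itself if `x ∈ S'`,
and the singleton `{x}` otherwise. -/
def eqClass {α : Type*} (S' : Set α) (x : α) : Set α :=
  {y | (x ∈ S' ∧ y ∈ S') ∨ (x ∉ S' ∧ y = x)}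

/-- The set of equivalence classes of `≡_{S'}`. -/
def quotClasses {α : Type*} (S' : Set α) : Set (Set α) :=
  Set.range (eqClass S')

/-- The quotient relation on equivalence classes: `A ≤ B` iff some `a ∈ A` and
`b ∈ B` satisfy `a ≤ b`. -/
def qle {α : Type*} [PartialOrder α] (A B : Set α) : Prop :=
  ∃ a ∈ A, ∃ b ∈ B, a ≤ b

section EqClass

variable {α : Type*} {S' : Set α} {x : α}

theorem eqClass_of_mem (hx : x ∈ S') : eqClass S' x = S' := by
  ext y
  simp [eqClass, hx]

theorem eqClass_of_notMem (hx : x ∉ S') : eqClass S' x = {x} := by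
  ext y
  simp [eqClass, hx]

theorem mem_eqClass_self : x ∈ eqClass S' x := by
  by_cases hx : x ∈ S'
  · simpa [eqClass_of_mem hx]
  · simp [eqClass_of_notMem hx]

theorem eq_eqClass_of_mem {A : Set α} (hA : A ∈ quotClasses S') (hx : x ∈ A) :
    A = eqClass S' x := by
  obtain ⟨y, rfl⟩ := hA
  by_cases hy : y ∈ S'
  · rw [eqClass_of_mem hy] at hx ⊢
    exact (eqClass_of_mem hx).symm
  · rw [eqClass_of_notMem hy] at hx ⊢
    rw [Set.mem_singleton_iff.mp hx, eqClass_of_notMem hy]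

theorem qle_self_of_mem_quotClasses [PartialOrder α] {A : Set α} (hA : A ∈ quotClasses S') :
    qle A A := by
  obtain ⟨x, rfl⟩ := hA
  exact ⟨x, mem_eqClass_self, x, mem_eqClass_self, le_rfl⟩

end EqClass

namespace IsIsolatedSuborder

variable {α : Type*} [PartialOrder α] {S' : Set α} {x y : α}

theorem mem_upperBounds_of_le (h : IsIsolatedSuborder S') (hx : x ∉ S') (hy : y ∈ S')
    (hyx : y ≤ x) : x ∈ upperBounds S' := by
  obtain ⟨_, t, _, ht, hiso⟩ := h
  exact fun z hz => (ht.2 hz).trans ((hiso x hx y hy).1 hyx)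

theorem mem_lowerBounds_of_le (h : IsIsolatedSuborder S') (hx : x ∉ S') (hy : y ∈ S')
    (hxy : x ≤ y) : x ∈ lowerBounds S' := by
  obtain ⟨b, _, hb, _, hiso⟩ := h
  exact fun z hz => ((hiso x hx y hy).2 hxy).trans (hb.2 hz)

/-- A comparison between a point outside `S'` and a point of `S'` passes through `⊤_{S'}` or
`⊥_{S'}`, hence holds for every point of `S'`. -/
theorem forall_le_of_qle (h : IsIsolatedSuborder S') {A B : Set α}
    (hA : A ∈ quotClasses S') (hB : B ∈ quotClasses S') (hAB : A ≠ B) (hle : qle A B) :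
    ∀ a ∈ A, ∀ b ∈ B, a ≤ b := by
  obtain ⟨x, hx, y, hy, hxy⟩ := hle
  rw [eq_eqClass_of_mem hA hx, eq_eqClass_of_mem hB hy] at hAB ⊢
  intro a ha b hb
  by_cases hxS : x ∈ S' <;> by_cases hyS : y ∈ S'
  · rw [eqClass_of_mem hxS, eqClass_of_mem hyS] at hAB
    exact absurd rfl hAB
  · rw [eqClass_of_mem hxS] at ha
    rw [eqClass_of_notMem hyS, Set.mem_singleton_iff] at hb
    rw [hb]
    exact h.mem_upperBounds_of_le hyS hxS hxy ha
  · rw [eqClass_of_notMem hxS, Set.mem_singleton_iff] at ha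
    rw [eqClass_of_mem hyS] at hb
    rw [ha]
    exact h.mem_lowerBounds_of_le hxS hyS hxy hb
  · rw [eqClass_of_notMem hxS, Set.mem_singleton_iff] at ha
    rw [eqClass_of_notMem hyS, Set.mem_singleton_iff] at hb
    rwa [ha, hb]

theorem qle_trans (h : IsIsolatedSuborder S') {A B D : Set α} (hB : B ∈ quotClasses S')
    (hD : D ∈ quotClasses S') (hAB : qle A B) (hBD : qle B D) : qle A D := by
  rcases eq_or_ne A B with rfl | -
  · exact hBD
  rcases eq_or_ne B D with rfl | hBD'
  · exact hAB
  obtain ⟨a, ha, b, hb, hab⟩ := hAB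
  obtain ⟨-, -, d, hd, -⟩ := id hBD
  exact ⟨a, ha, d, hd, hab.trans (h.forall_le_of_qle hB hD hBD' hBD b hb d hd)⟩

theorem qle_antisymm (h : IsIsolatedSuborder S') {A B : Set α} (hA : A ∈ quotClasses S')
    (hB : B ∈ quotClasses S') (hAB : qle A B) (hBA : qle B A) : A = B := by
  by_contra hne
  obtain ⟨a, ha, b, hb, -⟩ := id hAB
  have hle := h.forall_le_of_qle hA hB hne hAB
  have hge := h.forall_le_of_qle hB hA (Ne.symm hne) hBA
  have heq : ∀ a' ∈ A, ∀ b' ∈ B, a' = b' := fun a' ha' b' hb' =>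
    le_antisymm (hle a' ha' b' hb') (hge b' hb' a' ha')
  refine hne (Set.ext fun z => ⟨fun hz => ?_, fun hz => ?_⟩)
  · exact heq z hz b hb ▸ hb
  · exact (heq a ha z hz).symm ▸ ha

end IsIsolatedSuborder

/-- For an isolated suborder `S'`, the equivalence `≡_{S'}` is order generating:
the quotient relation is reflexive, transitive and antisymmetric on the set of
equivalence classes, i.e., a partial order. -/
theorem quotient_is_partialOrder {α : Type*} [PartialOrder α] (S' : Set α)
    (h : IsIsolatedSuborder S') :
    (∀ A ∈ quotClasses S', qle A A) ∧
    (∀ A ∈ quotClasses S', ∀ B ∈ quotClasses S', ∀ D ∈ quotClasses S',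
      qle A B → qle B D → qle A D) ∧
    (∀ A ∈ quotClasses S', ∀ B ∈ quotClasses S',
      qle A B → qle B A → A = B) :=
  ⟨fun _ hA => qle_self_of_mem_quotClasses hA,
    fun _ _ _ hB _ hD => h.qle_trans hB hD,
    fun _ hA _ hB => h.qle_antisymm hA hB⟩
end

section
/- Let S' be an isolated suborder of a partially ordered set (S,≤). Then S' is convex: for all x, y ∈ S' and z ∈ S, if x ≤ z ≤ y then z ∈ S'. In particular, S' equals the interval [⊥_{S'}, ⊤_{S'}] = {z ∈ S | ⊥_{S'} ≤ z and z ≤ ⊤_{S'}}. -/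
section

variable {α : Type*} [PartialOrder α] {s : Set α}

theorem IsIsolatedSuborder.ordConnected (h : IsIsolatedSuborder s) : s.OrdConnected := by
  obtain ⟨b, _, hb, -, hiso⟩ := h
  refine ⟨fun x hx y hy z ⟨hxz, hzy⟩ => ?_⟩
  by_contra hz
  have hzb : z ≤ b := (hiso z hz y hy).2 hzy
  have hbz : b ≤ z := (hb.2 hx).trans hxz
  exact hz (le_antisymm hzb hbz ▸ hb.1)

theorem Set.OrdConnected.eq_Icc_of_isLeast_of_isGreatest (hs : s.OrdConnected) {b t : α}
    (hb : IsLeast s b) (ht : IsGreatest s t) : s = Set.Icc b t :=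
  Set.Subset.antisymm (fun _ hz => ⟨hb.2 hz, ht.2 hz⟩) (hs.out hb.1 ht.1)

end

/-- An isolated suborder is convex; in particular it equals the interval
`[⊥_{S'}, ⊤_{S'}]`. -/
theorem isolatedSuborder_convex {α : Type*} [PartialOrder α] (S' : Set α)
    (h : IsIsolatedSuborder S') :
    (∀ x ∈ S', ∀ y ∈ S', ∀ z : α, x ≤ z → z ≤ y → z ∈ S') ∧
    (∀ b t : α, IsLeast S' b → IsGreatest S' t → S' = Set.Icc b t) := by
  have hconv := h.ordConnected
  exact ⟨fun x hx y hy z hxz hzy => hconv.out hx hy ⟨hxz, hzy⟩,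
    fun _ _ => hconv.eq_Icc_of_isLeast_of_isGreatest⟩
end

section
/- Let S₁ and S₂ be two isolated suborders of a partially ordered set (S,≤) with S₁ ∩ S₂ ≠ ∅. Then the set {⊥_{S₁}, ⊥_{S₂}, ⊤_{S₁}, ⊤_{S₂}} of their least and greatest elements is a chain, i.e., any two of these four elements are comparable. -/
namespace IsIsolatedSuborder

variable {α : Type*} [PartialOrder α] {S T : Set α} {b t b' t' x y : α}

theorem le_of_le_of_isLeast (hS : IsIsolatedSuborder S) (hb : IsLeast S b) (hx : x ∉ S)
    (hy : y ∈ S) (hxy : x ≤ y) : x ≤ b := by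
  obtain ⟨b₀, _, hb₀, -, hiso⟩ := hS
  exact hb₀.unique hb ▸ (hiso x hx y hy).2 hxy

theorem le_of_isGreatest_of_le (hS : IsIsolatedSuborder S) (ht : IsGreatest S t) (hx : x ∉ S)
    (hy : y ∈ S) (hyx : y ≤ x) : t ≤ x := by
  obtain ⟨_, t₀, -, ht₀, hiso⟩ := hS
  exact ht₀.unique ht ▸ (hiso x hx y hy).1 hyx

theorem le_or_ge_of_isLeast (hS : IsIsolatedSuborder S) (hb : IsLeast S b) (hb' : IsLeast T b')
    (hne : (T ∩ S).Nonempty) : b' ≤ b ∨ b ≤ b' := by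
  obtain ⟨z, hzT, hzS⟩ := hne
  by_cases hb'S : b' ∈ S
  · exact .inr (hb.2 hb'S)
  · exact .inl (hS.le_of_le_of_isLeast hb hb'S hzS (hb'.2 hzT))

theorem le_or_ge_of_isGreatest (hS : IsIsolatedSuborder S) (ht : IsGreatest S t)
    (ht' : IsGreatest T t') (hne : (T ∩ S).Nonempty) : t' ≤ t ∨ t ≤ t' := by
  obtain ⟨z, hzT, hzS⟩ := hne
  by_cases ht'S : t' ∈ S
  · exact .inl (ht.2 ht'S)
  · exact .inr (hS.le_of_isGreatest_of_le ht ht'S hzS (ht'.2 hzT))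

end IsIsolatedSuborder

theorem bots_tops_chain_general {α : Type*} [PartialOrder α] (S₁ S₂ : Set α)
    (h₂ : IsIsolatedSuborder S₂)
    (hne : (S₁ ∩ S₂).Nonempty) :
    ∀ b₁ t₁ b₂ t₂ : α, IsLeast S₁ b₁ → IsGreatest S₁ t₁ →
      IsLeast S₂ b₂ → IsGreatest S₂ t₂ →
      IsChain (· ≤ ·) ({b₁, b₂, t₁, t₂} : Set α) := by
  intro b₁ t₁ b₂ t₂ hb₁ ht₁ hb₂ ht₂
  have hbb := h₂.le_or_ge_of_isLeast hb₂ hb₁ hne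
  have htt := h₂.le_or_ge_of_isGreatest ht₂ ht₁ hne
  obtain ⟨z, hz₁, hz₂⟩ := hne
  have hb₁t₁ : b₁ ≤ t₁ := (hb₁.2 hz₁).trans (ht₁.2 hz₁)
  have hb₁t₂ : b₁ ≤ t₂ := (hb₁.2 hz₁).trans (ht₂.2 hz₂)
  have hb₂t₁ : b₂ ≤ t₁ := (hb₂.2 hz₂).trans (ht₁.2 hz₁)
  have hb₂t₂ : b₂ ≤ t₂ := (hb₂.2 hz₂).trans (ht₂.2 hz₂)
  refine ((IsChain.singleton.insert ?_).insert ?_).insert ?_ <;>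
    intro c hc _ <;> simp only [Set.mem_insert_iff, Set.mem_singleton_iff] at hc <;>
    rcases hc with rfl | rfl | rfl <;> tauto

/-- If two isolated suborders intersect, then the set consisting of their least and
greatest elements is a chain (pairwise comparable). -/
theorem bots_tops_chain {α : Type*} [PartialOrder α] (S₁ S₂ : Set α)
    (h₁ : IsIsolatedSuborder S₁) (h₂ : IsIsolatedSuborder S₂)
    (hne : (S₁ ∩ S₂).Nonempty) :
    ∀ b₁ t₁ b₂ t₂ : α, IsLeast S₁ b₁ → IsGreatest S₁ t₁ →
      IsLeast S₂ b₂ → IsGreatest S₂ t₂ →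
      IsChain (· ≤ ·) ({b₁, b₂, t₁, t₂} : Set α) :=
  bots_tops_chain_general S₁ S₂ h₂ hne
end

section
/- Let S₁ and S₂ be two isolated suborders of a partially ordered set (S,≤) with S₁ ∩ S₂ ≠ ∅. Then S₁ ∪ S₂ is an isolated suborder of (S,≤). -/
section IsolatedSuborder

variable {α : Type*} [PartialOrder α] {S S₁ S₂ : Set α} {b₁ b₂ t₁ t₂ : α}

def IsUpperIsolated (S : Set α) (t : α) : Prop :=
  IsGreatest S t ∧ ∀ x ∉ S, ∀ y ∈ S, y ≤ x → t ≤ x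

def IsLowerIsolated (S : Set α) (b : α) : Prop :=
  IsLeast S b ∧ ∀ x ∉ S, ∀ y ∈ S, x ≤ y → x ≤ b

theorem isIsolatedSuborder_iff_exists :
    IsIsolatedSuborder S ↔ ∃ b t, IsLowerIsolated S b ∧ IsUpperIsolated S t := by
  constructor
  · rintro ⟨b, t, hb, ht, hS⟩
    exact ⟨b, t, ⟨hb, fun x hx y hy => (hS x hx y hy).2⟩, ⟨ht, fun x hx y hy => (hS x hx y hy).1⟩⟩
  · rintro ⟨b, t, ⟨hb, hSb⟩, ⟨ht, hSt⟩⟩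
    exact ⟨b, t, hb, ht, fun x hx y hy => ⟨hSt x hx y hy, hSb x hx y hy⟩⟩

theorem IsUpperIsolated.le_or_le (h₁ : IsUpperIsolated S₁ t₁) (h₂ : IsGreatest S₂ t₂)
    (hne : (S₁ ∩ S₂).Nonempty) : t₁ ≤ t₂ ∨ t₂ ≤ t₁ := by
  obtain ⟨z, hz₁, hz₂⟩ := hne
  by_cases ht₂ : t₂ ∈ S₁
  · exact Or.inr (h₁.1.2 ht₂)
  · exact Or.inl (h₁.2 t₂ ht₂ z hz₁ (h₂.2 hz₂))

theorem IsUpperIsolated.union_of_le (h₁ : IsUpperIsolated S₁ t₁) (h₂ : IsUpperIsolated S₂ t₂)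
    (hle : t₁ ≤ t₂) (hne : (S₁ ∩ S₂).Nonempty) : IsUpperIsolated (S₁ ∪ S₂) t₂ := by
  obtain ⟨z, hz₁, hz₂⟩ := hne
  refine ⟨⟨Or.inr h₂.1.1, ?_⟩, ?_⟩
  · rintro y (hy | hy)
    exacts [(h₁.1.2 hy).trans hle, h₂.1.2 hy]
  · rintro x hx y (hy | hy) hyx
    · have ht₁x : t₁ ≤ x := h₁.2 x (fun h => hx (Or.inl h)) y hy hyx
      exact h₂.2 x (fun h => hx (Or.inr h)) z hz₂ ((h₁.1.2 hz₁).trans ht₁x)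
    · exact h₂.2 x (fun h => hx (Or.inr h)) y hy hyx

theorem IsUpperIsolated.union (h₁ : IsUpperIsolated S₁ t₁) (h₂ : IsUpperIsolated S₂ t₂)
    (hne : (S₁ ∩ S₂).Nonempty) : ∃ t, IsUpperIsolated (S₁ ∪ S₂) t := by
  rcases h₁.le_or_le h₂.1 hne with hle | hle
  · exact ⟨t₂, h₁.union_of_le h₂ hle hne⟩
  · rw [Set.union_comm]
    exact ⟨t₁, h₂.union_of_le h₁ hle (Set.inter_comm S₁ S₂ ▸ hne)⟩

theorem IsLowerIsolated.union (h₁ : IsLowerIsolated S₁ b₁)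
    (h₂ : IsLowerIsolated S₂ b₂) (hne : (S₁ ∩ S₂).Nonempty) :
    ∃ b, IsLowerIsolated (S₁ ∪ S₂) b :=
  IsUpperIsolated.union (α := αᵒᵈ) h₁ h₂ hne

end IsolatedSuborder

/-- The union of two isolated suborders with nonempty intersection is again an
isolated suborder. -/
theorem union_isolatedSuborder {α : Type*} [PartialOrder α] (S₁ S₂ : Set α)
    (h₁ : IsIsolatedSuborder S₁) (h₂ : IsIsolatedSuborder S₂)
    (hne : (S₁ ∩ S₂).Nonempty) :
    IsIsolatedSuborder (S₁ ∪ S₂) := by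
  obtain ⟨b₁, t₁, hb₁, ht₁⟩ := isIsolatedSuborder_iff_exists.1 h₁
  obtain ⟨b₂, t₂, hb₂, ht₂⟩ := isIsolatedSuborder_iff_exists.1 h₂
  obtain ⟨b, hb⟩ := hb₁.union hb₂ hne
  obtain ⟨t, ht⟩ := ht₁.union ht₂ hne
  exact isIsolatedSuborder_iff_exists.2 ⟨b, t, hb, ht⟩
end

section
/- Let S₁ and S₂ be two distinct isolated suborders with bottleneck of a partially ordered set (S,≤), each of which is inclusion-maximal among isolated suborders with bottleneck of (S,≤) (i.e., not strictly contained in any isolated suborder with bottleneck). Then S₁ and S₂ are disjoint: S₁ ∩ S₂ = ∅. -/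
/-- `b` is a *bottleneck* of `x`: `b > x`, the interval `[x,b]` is a chain, and every
`y > x` lies in `[x,b]` or satisfies `y > b`. -/
def IsBottleneck {α : Type*} [PartialOrder α] (x b : α) : Prop :=
  x < b ∧ IsChain (· ≤ ·) (Set.Icc x b) ∧ ∀ y, x < y → y ∈ Set.Icc x b ∨ b < y

/-- An *isolated suborder with bottleneck* is an isolated suborder whose greatest
element has a bottleneck. -/
def IsIsolatedSuborderWithBottleneck {α : Type*} [PartialOrder α] (S' : Set α) : Prop :=
  IsIsolatedSuborder S' ∧ ∃ t b, IsGreatest S' t ∧ IsBottleneck t b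


/-!
If two isolated suborders `S₁`, `S₂` share a point `z`, then any `x ∉ S₂` lying above a point
of `S₁` lies above `z`, hence above all of `S₂` (and dually below). So the top of one of them
bounds the other, and `S₁ ∪ S₂` is again an isolated suborder whose top is the top of `S₁` or of
`S₂`, and therefore still has a bottleneck. Maximality then gives `S₁ = S₁ ∪ S₂ = S₂`.
-/

section

variable {α : Type*} [PartialOrder α] {S S₁ S₂ : Set α} {x y z t₁ t₂ : α}

namespace IsIsolatedSuborder

lemma dual (hS : IsIsolatedSuborder S) : IsIsolatedSuborder (α := αᵒᵈ) S := by
  obtain ⟨b, t, hb, ht, hiso⟩ := hS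
  exact ⟨t, b, ht, hb, fun x hx y hy => (hiso x hx y hy).symm⟩

lemma mem_upperBounds (hS : IsIsolatedSuborder S) (hx : x ∉ S) (hy : y ∈ S) (hyx : y ≤ x) :
    x ∈ upperBounds S := by
  obtain ⟨_, t, _, ht, hiso⟩ := hS
  exact fun w hw => (ht.2 hw).trans ((hiso x hx y hy).1 hyx)

lemma mem_upperBounds_union (h₁ : IsIsolatedSuborder S₁) (h₂ : IsIsolatedSuborder S₂)
    (hz₁ : z ∈ S₁) (hz₂ : z ∈ S₂) (hx : x ∉ S₁ ∪ S₂) (hy : y ∈ S₁ ∪ S₂) (hyx : y ≤ x) :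
    x ∈ upperBounds (S₁ ∪ S₂) := by
  rw [Set.mem_union, not_or] at hx
  obtain ⟨hx₁, hx₂⟩ := hx
  rw [upperBounds_union]
  rcases hy with hy | hy
  · have hub₁ := h₁.mem_upperBounds hx₁ hy hyx
    exact ⟨hub₁, h₂.mem_upperBounds hx₂ hz₂ (hub₁ hz₁)⟩
  · have hub₂ := h₂.mem_upperBounds hx₂ hy hyx
    exact ⟨h₁.mem_upperBounds hx₁ hz₁ (hub₂ hz₂), hub₂⟩

lemma isGreatest_union (h₁ : IsIsolatedSuborder S₁) (hz₁ : z ∈ S₁) (hz₂ : z ∈ S₂)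
    (ht₁ : IsGreatest S₁ t₁) (ht₂ : IsGreatest S₂ t₂) :
    IsGreatest (S₁ ∪ S₂) t₁ ∨ IsGreatest (S₁ ∪ S₂) t₂ := by
  simp only [IsGreatest, upperBounds_union]
  by_cases ht₂₁ : t₂ ∈ S₁
  · exact .inl ⟨.inl ht₁.1, ht₁.2, fun w hw => (ht₂.2 hw).trans (ht₁.2 ht₂₁)⟩
  · exact .inr ⟨.inr ht₂.1, h₁.mem_upperBounds ht₂₁ hz₁ (ht₂.2 hz₂), ht₂.2⟩

protected lemma union (h₁ : IsIsolatedSuborder S₁) (h₂ : IsIsolatedSuborder S₂)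
    (hz₁ : z ∈ S₁) (hz₂ : z ∈ S₂) : IsIsolatedSuborder (S₁ ∪ S₂) := by
  obtain ⟨b₁, t₁, hb₁, ht₁, -⟩ := id h₁
  obtain ⟨b₂, t₂, hb₂, ht₂, -⟩ := id h₂
  obtain ⟨b, hb⟩ : ∃ b, IsLeast (S₁ ∪ S₂) b :=
    (h₁.dual.isGreatest_union hz₁ hz₂ hb₁ hb₂).elim (⟨b₁, ·⟩) (⟨b₂, ·⟩)
  obtain ⟨t, ht⟩ : ∃ t, IsGreatest (S₁ ∪ S₂) t :=
    (h₁.isGreatest_union hz₁ hz₂ ht₁ ht₂).elim (⟨t₁, ·⟩) (⟨t₂, ·⟩)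
  refine ⟨b, t, hb, ht, fun x hx y hy => ⟨fun hyx => ?_, fun hxy => ?_⟩⟩
  · exact h₁.mem_upperBounds_union h₂ hz₁ hz₂ hx hy hyx ht.1
  · exact h₁.dual.mem_upperBounds_union h₂.dual hz₁ hz₂ hx hy hxy hb.1

end IsIsolatedSuborder

lemma IsIsolatedSuborderWithBottleneck.union (h₁ : IsIsolatedSuborderWithBottleneck S₁)
    (h₂ : IsIsolatedSuborderWithBottleneck S₂) (hz₁ : z ∈ S₁) (hz₂ : z ∈ S₂) :
    IsIsolatedSuborderWithBottleneck (S₁ ∪ S₂) := by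
  obtain ⟨hiso₁, t₁, c₁, ht₁, hc₁⟩ := h₁
  obtain ⟨hiso₂, t₂, c₂, ht₂, hc₂⟩ := h₂
  refine ⟨hiso₁.union hiso₂ hz₁ hz₂, ?_⟩
  rcases hiso₁.isGreatest_union hz₁ hz₂ ht₁ ht₂ with ht | ht
  exacts [⟨t₁, c₁, ht, hc₁⟩, ⟨t₂, c₂, ht, hc₂⟩]

end

/-- Two distinct inclusion-maximal isolated suborders with bottleneck are disjoint. -/
theorem maximal_bottleneck_isolatedSuborders_disjoint {α : Type*} [PartialOrder α]
    (S₁ S₂ : Set α)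
    (h₁ : IsIsolatedSuborderWithBottleneck S₁)
    (h₂ : IsIsolatedSuborderWithBottleneck S₂)
    (hmax₁ : ∀ T : Set α, IsIsolatedSuborderWithBottleneck T → S₁ ⊆ T → S₁ = T)
    (hmax₂ : ∀ T : Set α, IsIsolatedSuborderWithBottleneck T → S₂ ⊆ T → S₂ = T)
    (hne : S₁ ≠ S₂) :
    S₁ ∩ S₂ = ∅ := by
  rw [← Set.not_nonempty_iff_eq_empty]
  rintro ⟨z, hz₁, hz₂⟩
  have hunion := h₁.union h₂ hz₁ hz₂
  have h₁₂ : S₁ ∪ S₂ = S₁ := (hmax₁ _ hunion Set.subset_union_left).symm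
  exact hne (hmax₂ S₁ h₁ (Set.union_eq_left.mp h₁₂)).symm
end

section
/- Let (S,≤) be a partially ordered set, let s ∈ S be a maximal element, and let S₁ and S₂ be nontrivial summit isolated suborders with greatest element s, each inclusion-maximal among nontrivial summit isolated suborders with greatest element s. Then S₁ = S₂. In other words, for every maximal element s of S there is at most one inclusion-maximal nontrivial summit isolated suborder with s as greatest element. -/
/-- A *nontrivial summit isolated suborder with greatest element `s`*: an isolated
suborder, different from the whole carrier set, whose greatest element is `s`
(with `s` a maximal element of the order). -/
def IsNontrivialSummitWithTop {α : Type*} [PartialOrder α] (s : α) (S' : Set α) : Prop :=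
  IsIsolatedSuborder S' ∧ IsGreatest S' s ∧ S' ≠ Set.univ

/-!
Two isolated suborders with the same greatest element are nested: an element of one that lies
outside the other is trapped between the two least elements and so coincides with one of them.
Two inclusion-maximal ones are therefore equal.
-/

namespace IsIsolatedSuborder

variable {α : Type*} [PartialOrder α] {S T : Set α} {b c t x : α}

theorem le_of_notMem (hS : IsIsolatedSuborder S) (hb : IsLeast S b) (ht : t ∈ S)
    (hx : x ∉ S) (hxt : x ≤ t) : x ≤ b := by
  obtain ⟨b', _, hb', _, hiso⟩ := hS
  exact hb.unique hb' ▸ (hiso x hx t ht).2 hxt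

theorem subset_of_isLeast_mem (hS : IsIsolatedSuborder S) (hb : IsLeast S b)
    (ht : t ∈ S) (hTt : t ∈ upperBounds T) (hc : IsLeast T c) (hcS : c ∈ S) :
    T ⊆ S := by
  intro y hy
  by_contra hyS
  have hyc : y = c :=
    le_antisymm ((hS.le_of_notMem hb ht hyS (hTt hy)).trans (hb.2 hcS)) (hc.2 hy)
  exact hyS (hyc ▸ hcS)

theorem subset_or_subset_of_isGreatest (hS : IsIsolatedSuborder S)
    (hT : IsIsolatedSuborder T) (hSt : IsGreatest S t) (hTt : IsGreatest T t) :
    S ⊆ T ∨ T ⊆ S := by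
  have ⟨b, _, hb, _⟩ := hS
  have ⟨c, _, hc, _⟩ := hT
  by_cases hcS : c ∈ S
  · exact .inr (hS.subset_of_isLeast_mem hb hSt.1 hTt.2 hc hcS)
  · have hcb : c ≤ b := hS.le_of_notMem hb hSt.1 hcS (hTt.2 hc.1)
    have hbT : b ∈ T := by
      by_contra hbT
      exact hcS (le_antisymm hcb (hT.le_of_notMem hc hTt.1 hbT (hSt.2 hb.1)) ▸ hb.1)
    exact .inl (hT.subset_of_isLeast_mem hc hTt.1 hSt.2 hb hbT)

end IsIsolatedSuborder

theorem unique_maximal_summit_isolatedSuborder_general {α : Type*} [PartialOrder α]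
    (s : α) (S₁ S₂ : Set α)
    (h₁ : IsNontrivialSummitWithTop s S₁)
    (h₂ : IsNontrivialSummitWithTop s S₂)
    (hmax₁ : ∀ T : Set α, IsNontrivialSummitWithTop s T → S₁ ⊆ T → S₁ = T)
    (hmax₂ : ∀ T : Set α, IsNontrivialSummitWithTop s T → S₂ ⊆ T → S₂ = T) :
    S₁ = S₂ := by
  rcases h₁.1.subset_or_subset_of_isGreatest h₂.1 h₁.2.1 h₂.2.1 with h | h
  · exact hmax₁ S₂ h₂ h
  · exact (hmax₂ S₁ h₁ h).symm

/-- For every maximal element `s` there is at most one inclusion-maximal nontrivial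
summit isolated suborder with `s` as greatest element. -/
theorem unique_maximal_summit_isolatedSuborder {α : Type*} [PartialOrder α]
    (s : α) (hs : ∀ y : α, s ≤ y → y = s) (S₁ S₂ : Set α)
    (h₁ : IsNontrivialSummitWithTop s S₁)
    (h₂ : IsNontrivialSummitWithTop s S₂)
    (hmax₁ : ∀ T : Set α, IsNontrivialSummitWithTop s T → S₁ ⊆ T → S₁ = T)
    (hmax₂ : ∀ T : Set α, IsNontrivialSummitWithTop s T → S₂ ⊆ T → S₂ = T) :
    S₁ = S₂ :=
  unique_maximal_summit_isolatedSuborder_general s S₁ S₂ h₁ h₂ hmax₁ hmax₂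
end

section
/- Let C be a closure system of a partially ordered set (S,≤), and let S' be an isolated suborder of (S,≤). Then C ∩ S' is a preclosure system of S' equipped with the order induced from ≤ (note that S' has greatest element ⊤_{S'}). Moreover, if S' is a summit isolated suborder, then C ∩ S' is a closure system of S' with the induced order. -/
/-- A subset `C` of a partially ordered set is a *closure system* if for every `s`
the set of elements of `C` majorizing `s` has a least element. -/
def IsClosureSystem {α : Type*} [PartialOrder α] (C : Set α) : Prop :=
  ∀ s : α, ∃ m, IsLeast {c ∈ C | s ≤ c} m

/-- `C` is a closure system of the ordered set with carrier `carrier` and order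
relation `r`. -/
def IsClosureSystemRel {β : Type*} (r : β → β → Prop) (carrier C : Set β) : Prop :=
  C ⊆ carrier ∧ ∀ s ∈ carrier, ∃ m, (m ∈ C ∧ r s m) ∧ ∀ c ∈ C, r s c → r m c

/-! For `s ∈ S'` let `m` be its closure in `S`. If `m ∈ S'`, it is also the closure of `s` in
`S'`. Otherwise isolation forces `⊤_{S'} ≤ m`, so no element of `C ∩ S'` majorizes `s` and the
closure in `S'` can only be `⊤_{S'}`; when `⊤_{S'}` is maximal in `S` this case cannot occur. -/

section

variable {α : Type*} [PartialOrder α] {C S' : Set α} {s t m x y : α}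

theorem isClosureSystemRel_of_isLeast (hC : C ⊆ S')
    (h : ∀ s ∈ S', ∃ m, IsLeast {c ∈ C | s ≤ c} m) : IsClosureSystemRel (· ≤ ·) S' C :=
  ⟨hC, fun s hs => (h s hs).imp fun _ hm => ⟨hm.1, fun _ hc hsc => hm.2 ⟨hc, hsc⟩⟩⟩

namespace IsIsolatedSuborder

theorem le_of_le_of_notMem (hS' : IsIsolatedSuborder S') (ht : IsGreatest S' t)
    (hy : y ∈ S') (hyx : y ≤ x) (hx : x ∉ S') : t ≤ x := by
  obtain ⟨_, t', _, ht', hiso⟩ := hS'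
  exact ht'.unique ht ▸ (hiso x hx y hy).1 hyx

theorem mem_of_le (hS' : IsIsolatedSuborder S') (ht : IsGreatest S' t)
    (ht_max : ∀ y, t ≤ y → y = t) (hy : y ∈ S') (hyx : y ≤ x) : x ∈ S' := by
  by_contra hx
  exact hx (ht_max x (hS'.le_of_le_of_notMem ht hy hyx hx) ▸ ht.1)

end IsIsolatedSuborder

theorem isLeast_inter_of_mem (hm : IsLeast {c ∈ C | s ≤ c} m) (hmS' : m ∈ S') :
    IsLeast {c ∈ C ∩ S' | s ≤ c} m :=
  ⟨⟨⟨hm.1.1, hmS'⟩, hm.1.2⟩, fun _ hc => hm.2 ⟨hc.1.1, hc.2⟩⟩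

theorem isLeast_inter_union_top (hS' : IsIsolatedSuborder S') (ht : IsGreatest S' t)
    (hs : s ∈ S') (hm : IsLeast {c ∈ C | s ≤ c} m) :
    ∃ m', IsLeast {c ∈ C ∩ S' ∪ {t} | s ≤ c} m' := by
  by_cases hmS' : m ∈ S'
  · refine ⟨m, ⟨Or.inl ⟨hm.1.1, hmS'⟩, hm.1.2⟩, ?_⟩
    rintro c ⟨hc | rfl, hsc⟩
    · exact hm.2 ⟨hc.1, hsc⟩
    · exact ht.2 hmS'
  · have htm : t ≤ m := hS'.le_of_le_of_notMem ht hs hm.1.2 hmS'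
    refine ⟨t, ⟨Or.inr rfl, ht.2 hs⟩, ?_⟩
    rintro c ⟨hc | rfl, hsc⟩
    · exact htm.trans (hm.2 ⟨hc.1, hsc⟩)
    · exact le_rfl

end

/-- The intersection of a closure system of `(S,≤)` with an isolated suborder `S'`
is a preclosure system of `S'` with the induced order (i.e. adding `⊤_{S'}` gives a
closure system of `S'`); if `S'` is a summit isolated suborder (its greatest element
is maximal in `S`), the intersection is itself a closure system of `S'`. -/
theorem closureSystem_inter_isolatedSuborder {α : Type*} [PartialOrder α]
    (C S' : Set α) (hC : IsClosureSystem C) (hS' : IsIsolatedSuborder S') :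
    (∀ t : α, IsGreatest S' t →
      IsClosureSystemRel (· ≤ ·) S' ((C ∩ S') ∪ {t})) ∧
    ((∃ t, IsGreatest S' t ∧ ∀ y : α, t ≤ y → y = t) →
      IsClosureSystemRel (· ≤ ·) S' (C ∩ S')) := by
  refine ⟨fun t ht => ?_, fun ⟨t, ht, ht_max⟩ => ?_⟩
  · refine isClosureSystemRel_of_isLeast ?_ fun s hs => ?_
    · rintro c (hc | rfl)
      exacts [hc.2, ht.1]
    · obtain ⟨m, hm⟩ := hC s
      exact isLeast_inter_union_top hS' ht hs hm
  · refine isClosureSystemRel_of_isLeast Set.inter_subset_right fun s hs => ?_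
    obtain ⟨m, hm⟩ := hC s
    exact ⟨m, isLeast_inter_of_mem hm (hS'.mem_of_le ht ht_max hs hm.1.2)⟩
end

section
/- Let (S,≤) be a partially ordered set and S' an isolated suborder of (S,≤) such that ⊤_{S'} has a least bottleneck b (i.e., b is a bottleneck of ⊤_{S'} and b ≤ b' for every bottleneck b' of ⊤_{S'}). Let C_{S'} be a preclosure system of S' with the induced order, and let C' be a closure system of the quotient (Q, ≤_{S'}) with S' ∈ C', where Q is the set of equivalence classes of ≡_{S'}. Then C := ⋃(C' \ {S'}) ∪ C_{S'} is a closure system of (S,≤). -/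
/-- `b` is the least element of `A` with respect to the relation `r`. -/
def IsLeastRel {β : Type*} (r : β → β → Prop) (A : Set β) (b : β) : Prop :=
  b ∈ A ∧ ∀ y ∈ A, r b y

/-- `t` is the greatest element of `A` with respect to the relation `r`. -/
def IsGreatestRel {β : Type*} (r : β → β → Prop) (A : Set β) (t : β) : Prop :=
  t ∈ A ∧ ∀ y ∈ A, r y t

/-- `S'` is an isolated suborder of the ordered set with carrier `carrier` and
order relation `r`. -/
def IsIsolatedSuborderRel {β : Type*} (r : β → β → Prop) (carrier S' : Set β) : Prop :=
  S' ⊆ carrier ∧ ∃ b t, IsLeastRel r S' b ∧ IsGreatestRel r S' t ∧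
    ∀ x ∈ carrier, x ∉ S' → ∀ y ∈ S', (r y x → r t x) ∧ (r x y → r x b)

/-!
The elements of `C = ⋃(C' \ {S'}) ∪ C_{S'}` outside `S'` are exactly the `c ∉ S'` with
`{c} ∈ C'`. For `s ∈ S'` the `C_{S'} ∪ {⊤}`-closure of `s` is its `C`-closure unless it is `⊤`;
in that case `C` has nothing in `S'` above `s`, and by isolation the relevant elements of `C` are
those strictly above `⊤`. Because the least bottleneck `b` covers `⊤`, these are the elements of
`C` above `b`, and the `C'`-closure of `{b}` is a singleton `{m}` with `m` least among them.
For `s ∉ S'` the `C'`-closure of `{s}` is either a singleton `{x}`, and then `x` is the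
`C`-closure of `s`, or `S'` itself, and then `s` has the same upper bounds in `C` as `⊥_{S'}`.
-/

section Bottleneck

variable {α : Type*} [PartialOrder α] {x b c : α}

theorem IsBottleneck.of_mem_Ioc (hb : IsBottleneck x b) (hc : c ∈ Set.Ioc x b) :
    IsBottleneck x c := by
  refine ⟨hc.1, hb.2.1.mono (Set.Icc_subset_Icc_right hc.2), fun y hxy => ?_⟩
  rcases hb.2.2 y hxy with hy | hby
  · rcases hb.2.1.total hy (Set.Ioc_subset_Icc_self hc) with hyc | hcy
    · exact Or.inl ⟨hxy.le, hyc⟩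
    · obtain rfl | hcy := hcy.eq_or_lt
      · exact Or.inl ⟨hxy.le, le_rfl⟩
      · exact Or.inr hcy
  · exact Or.inr (hc.2.trans_lt hby)

theorem IsBottleneck.le_iff_lt (hb : IsBottleneck x b)
    (hleast : ∀ b', IsBottleneck x b' → b ≤ b') : b ≤ c ↔ x < c := by
  refine ⟨hb.1.trans_le, fun hxc => ?_⟩
  rcases hb.2.2 c hxc with hc | hbc
  · exact hleast c (hb.of_mem_Ioc ⟨hxc, hc.2⟩)
  · exact hbc.le

end Bottleneck

section Quotient

variable {α : Type*} {S' : Set α} {x : α}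

theorem eq_or_eq_singleton_of_mem_quotClasses {M : Set α} (hM : M ∈ quotClasses S') :
    M = S' ∨ ∃ x ∉ S', M = {x} := by
  obtain ⟨x, rfl⟩ := hM
  by_cases hx : x ∈ S'
  · left
    ext y
    simp [eqClass, hx]
  · exact Or.inr ⟨x, hx, eqClass_of_notMem hx⟩

theorem mem_sUnion_diff_singleton_iff {C' : Set (Set α)} (hC' : C' ⊆ quotClasses S') :
    x ∈ ⋃₀ (C' \ {S'}) ↔ x ∉ S' ∧ {x} ∈ C' := by
  constructor
  · rintro ⟨M, ⟨hMC, hMS⟩, hxM⟩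
    rcases eq_or_eq_singleton_of_mem_quotClasses (hC' hMC) with rfl | ⟨y, hy, rfl⟩
    · exact absurd rfl hMS
    · obtain rfl := hxM
      exact ⟨hy, hMC⟩
  · rintro ⟨hx, hxC⟩
    exact ⟨{x}, ⟨hxC, fun h => hx (h ▸ rfl)⟩, rfl⟩

variable [PartialOrder α]

theorem qle_singleton_left {a : α} {B : Set α} : qle {a} B ↔ ∃ b ∈ B, a ≤ b := by
  simp [qle]

theorem qle_singleton_right {A : Set α} {b : α} : qle A {b} ↔ ∃ a ∈ A, a ≤ b := by
  simp [qle]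

@[simp]
theorem qle_singleton_singleton {a b : α} : qle {a} {b} ↔ a ≤ b := by
  simp [qle]

theorem exists_closure_of_notMem {C' : Set (Set α)}
    (hC' : IsClosureSystemRel qle (quotClasses S') C') (hx : x ∉ S') :
    ∃ M ∈ C', qle {x} M ∧ (∀ D ∈ C', qle {x} D → qle M D) ∧ (M = S' ∨ ∃ y ∉ S', M = {y}) := by
  obtain ⟨M, ⟨hMC, hxM⟩, hmin⟩ := hC'.2 _ ⟨x, rfl⟩
  rw [eqClass_of_notMem hx] at hxM hmin
  exact ⟨M, hMC, hxM, hmin, eq_or_eq_singleton_of_mem_quotClasses (hC'.1 hMC)⟩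

end Quotient

section Glue

variable {α : Type*} {S' CS' : Set α} {C' : Set (Set α)}

def gluedSystem (S' CS' : Set α) (C' : Set (Set α)) : Set α :=
  ⋃₀ (C' \ {S'}) ∪ CS'

variable [PartialOrder α] {bot t s x : α}

theorem isLeast_gluedSystem_of_closure_eq_singleton (hC'sub : C' ⊆ quotClasses S')
    (hCS'sub : CS' ⊆ S') (hmem : S' ∈ C') (hbot : IsLeast S' bot)
    (hiso_bot : ∀ x ∉ S', ∀ y ∈ S', x ≤ y → x ≤ bot)
    (hx : x ∉ S') (hxC : {x} ∈ C') (hsx : s ≤ x) (hmin : ∀ D ∈ C', qle {s} D → qle {x} D) :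
    IsLeast {c ∈ gluedSystem S' CS' C' | s ≤ c} x := by
  refine ⟨⟨Or.inl ((mem_sUnion_diff_singleton_iff hC'sub).2 ⟨hx, hxC⟩), hsx⟩, ?_⟩
  rintro c ⟨hc | hc, hsc⟩
  · have hcC := ((mem_sUnion_diff_singleton_iff hC'sub).1 hc).2
    simpa using hmin {c} hcC (by simpa using hsc)
  · obtain ⟨y, hy, hxy⟩ :=
      qle_singleton_left.1 (hmin S' hmem (qle_singleton_left.2 ⟨c, hCS'sub hc, hsc⟩))
    exact (hiso_bot x hx y hy hxy).trans (hbot.2 (hCS'sub hc))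

theorem setOf_gluedSystem_le_eq_of_closure_eq_self (hC'sub : C' ⊆ quotClasses S')
    (hCS'sub : CS' ⊆ S') (hbot : IsLeast S' bot) (ht : IsGreatest S' t)
    (hiso_top : ∀ x ∉ S', ∀ y ∈ S', y ≤ x → t ≤ x)
    (hiso_bot : ∀ x ∉ S', ∀ y ∈ S', x ≤ y → x ≤ bot)
    (hs : s ∉ S') (hsS' : qle {s} S') (hmin : ∀ D ∈ C', qle {s} D → qle S' D) :
    {c ∈ gluedSystem S' CS' C' | s ≤ c} = {c ∈ gluedSystem S' CS' C' | bot ≤ c} := by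
  obtain ⟨y, hy, hsy⟩ := qle_singleton_left.1 hsS'
  have hsbot : s ≤ bot := hiso_bot s hs y hy hsy
  ext c
  refine ⟨fun ⟨hcC, hsc⟩ => ⟨hcC, ?_⟩, fun ⟨hcC, hbc⟩ => ⟨hcC, hsbot.trans hbc⟩⟩
  rcases hcC with hc | hc
  · obtain ⟨hcS, hcC'⟩ := (mem_sUnion_diff_singleton_iff hC'sub).1 hc
    obtain ⟨z, hz, hzc⟩ := qle_singleton_right.1 (hmin {c} hcC' (by simpa using hsc))
    exact (hbot.2 ht.1).trans (hiso_top c hcS z hz hzc)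
  · exact hbot.2 (hCS'sub hc)

theorem exists_isLeast_gluedSystem_gt {b : α} (hC' : IsClosureSystemRel qle (quotClasses S') C')
    (hCS'sub : CS' ⊆ S') (hmem : S' ∈ C') (hbot : IsLeast S' bot) (ht : IsGreatest S' t)
    (hiso_bot : ∀ x ∉ S', ∀ y ∈ S', x ≤ y → x ≤ bot)
    (hb : IsBottleneck t b) (hbleast : ∀ b', IsBottleneck t b' → b ≤ b') :
    ∃ m, IsLeast {c ∈ gluedSystem S' CS' C' | t < c} m := by
  have hbS : b ∉ S' := fun h => (ht.2 h).not_gt hb.1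
  obtain ⟨M, hMC, hbM, hmin, rfl | ⟨x, hx, rfl⟩⟩ := exists_closure_of_notMem hC' hbS
  · obtain ⟨y, hy, hby⟩ := qle_singleton_left.1 hbM
    exact absurd (hby.trans (ht.2 hy)) hb.1.not_ge
  · simp_rw [← hb.le_iff_lt hbleast]
    exact ⟨x, isLeast_gluedSystem_of_closure_eq_singleton hC'.1 hCS'sub hmem hbot hiso_bot hx hMC
      (by simpa using hbM) hmin⟩

theorem exists_isLeast_gluedSystem_of_mem (hC'sub : C' ⊆ quotClasses S') (hCS'sub : CS' ⊆ S')
    (hCS' : IsClosureSystemRel (· ≤ ·) S' (CS' ∪ {t})) (ht : IsGreatest S' t)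
    (hiso_top : ∀ x ∉ S', ∀ y ∈ S', y ≤ x → t ≤ x)
    (hgt : ∃ m, IsLeast {c ∈ gluedSystem S' CS' C' | t < c} m) (hs : s ∈ S') :
    ∃ m, IsLeast {c ∈ gluedSystem S' CS' C' | s ≤ c} m := by
  have hmem_or_gt : ∀ c ∈ gluedSystem S' CS' C', s ≤ c → c ∈ CS' ∨ t < c := by
    rintro c (hc | hc) hsc
    · obtain ⟨hcS, -⟩ := (mem_sUnion_diff_singleton_iff hC'sub).1 hc
      exact Or.inr ((hiso_top c hcS s hs hsc).lt_of_ne fun h => hcS (h ▸ ht.1))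
    · exact Or.inl hc
  obtain ⟨m, ⟨hmC, hsm⟩, hmin⟩ := hCS'.2 s hs
  by_cases hm : m ∈ CS'
  · refine ⟨m, ⟨Or.inr hm, hsm⟩, fun c ⟨hcC, hsc⟩ => ?_⟩
    rcases hmem_or_gt c hcC hsc with hc | htc
    · exact hmin c (Or.inl hc) hsc
    · exact (ht.2 (hCS'sub hm)).trans htc.le
  · obtain rfl : t = m := (hmC.resolve_left hm).symm
    -- the `C_{S'} ∪ {⊤}`-closure of `s` being `⊤ ∉ C_{S'}`, no element of `C_{S'}` lies above `s`
    suffices {c ∈ gluedSystem S' CS' C' | s ≤ c} = {c ∈ gluedSystem S' CS' C' | t < c} by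
      rwa [this]
    ext c
    refine ⟨fun ⟨hcC, hsc⟩ => ⟨hcC, ?_⟩, fun ⟨hcC, htc⟩ => ⟨hcC, (ht.2 hs).trans htc.le⟩⟩
    refine (hmem_or_gt c hcC hsc).resolve_left fun hc => hm ?_
    rwa [← (ht.2 (hCS'sub hc)).antisymm (hmin c (Or.inl hc) hsc)]

end Glue

/-- Let `S'` be an isolated suborder whose greatest element `t` has a least
bottleneck `b`. If `C_{S'}` is a preclosure system of `S'` with the induced order
and `C'` is a closure system of the quotient with `S' ∈ C'`, then
`⋃(C' \ {S'}) ∪ C_{S'}` is a closure system of `(S,≤)`. -/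
theorem closureSystem_from_quotient_bottleneck {α : Type*} [PartialOrder α]
    (S' : Set α) (hS' : IsIsolatedSuborder S')
    (t b : α) (ht : IsGreatest S' t)
    (hb : IsBottleneck t b) (hbleast : ∀ b' : α, IsBottleneck t b' → b ≤ b')
    (CS' : Set α) (hCS'sub : CS' ⊆ S')
    (hCS' : IsClosureSystemRel (· ≤ ·) S' (CS' ∪ {t}))
    (C' : Set (Set α)) (hC' : IsClosureSystemRel qle (quotClasses S') C')
    (hmem : S' ∈ C') :
    IsClosureSystem (⋃₀ (C' \ {S'}) ∪ CS') := by
  obtain ⟨bot, top, hbot, htop, hiso⟩ := hS'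
  obtain rfl : t = top := ht.unique htop
  have hiso_top : ∀ x ∉ S', ∀ y ∈ S', y ≤ x → t ≤ x := fun x hx y hy => (hiso x hx y hy).1
  have hiso_bot : ∀ x ∉ S', ∀ y ∈ S', x ≤ y → x ≤ bot := fun x hx y hy => (hiso x hx y hy).2
  change IsClosureSystem (gluedSystem S' CS' C')
  have hgt := exists_isLeast_gluedSystem_gt hC' hCS'sub hmem hbot ht hiso_bot hb hbleast
  intro s
  by_cases hs : s ∈ S'
  · exact exists_isLeast_gluedSystem_of_mem hC'.1 hCS'sub hCS' ht hiso_top hgt hs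
  obtain ⟨M, hMC, hsM, hmin, rfl | ⟨x, hx, rfl⟩⟩ := exists_closure_of_notMem hC' hs
  · rw [setOf_gluedSystem_le_eq_of_closure_eq_self hC'.1 hCS'sub hbot ht hiso_top hiso_bot hs hsM hmin]
    exact exists_isLeast_gluedSystem_of_mem hC'.1 hCS'sub hCS' ht hiso_top hgt hbot.1
  · exact ⟨x, isLeast_gluedSystem_of_closure_eq_singleton hC'.1 hCS'sub hmem hbot hiso_bot hx hMC
      (by simpa using hsM) hmin⟩
end

section
/- Let (S,≤) be a finite nonempty linear order (a chain) with n elements, with greatest element ⊤_S, and let T ⊆ S. Then the number of closure systems C of (S,≤) with T ⊆ C equals 2^(n − 1 − |T \ {⊤_S}|). -/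
section

variable {α : Type*}

theorem IsClosureSystem.mem_of_forall_le [PartialOrder α] {C : Set α} (hC : IsClosureSystem C)
    {a : α} (ha : ∀ x, x ≤ a) : a ∈ C := by
  obtain ⟨m, ⟨hmC, ham⟩, -⟩ := hC a
  rwa [← le_antisymm (ha m) ham]

theorem isClosureSystem_of_forall_le_mem [LinearOrder α] [Finite α] {C : Set α} {a : α}
    (ha : ∀ x, x ≤ a) (haC : a ∈ C) : IsClosureSystem C := fun s => by
  obtain ⟨m, hm⟩ := (Set.toFinite {c ∈ C | s ≤ c}).exists_minimal ⟨a, haC, ha s⟩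
  exact ⟨m, minimal_iff_isLeast.mp hm⟩

theorem isClosureSystem_iff_mem_of_forall_le [LinearOrder α] [Finite α] {C : Set α} {a : α}
    (ha : ∀ x, x ≤ a) : IsClosureSystem C ↔ a ∈ C :=
  ⟨fun hC => hC.mem_of_forall_le ha, isClosureSystem_of_forall_le_mem ha⟩

theorem Set.ncard_setOf_superset [Fintype α] (A : Set α) :
    {C : Set α | A ⊆ C}.ncard = 2 ^ (Fintype.card α - A.ncard) := by
  classical
  have hIci : {C : Set α | A ⊆ C} = Fintype.finsetOrderIsoSet '' ↑(Finset.Icc A.toFinset ⊤) := by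
    rw [Finset.coe_Icc, Set.Icc_top, OrderIso.image_Ici]
    simp only [Fintype.coe_finsetOrderIsoSet, Set.coe_toFinset]; rfl
  rw [hIci, Set.ncard_image_of_injective _ (OrderIso.injective _), Set.ncard_coe_finset,
    Finset.card_Icc_finset le_top, Finset.top_eq_univ, Finset.card_univ,
    Set.ncard_eq_toFinset_card']

end

theorem card_closureSystems_chain_general {α : Type*} [LinearOrder α] [Fintype α]
    (topS : α) (htop : ∀ x : α, x ≤ topS) (T : Set α) :
    {C : Set α | IsClosureSystem C ∧ T ⊆ C}.ncard =
      2 ^ (Fintype.card α - 1 - (T \ {topS}).ncard) := by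
  have hsupersets : {C : Set α | IsClosureSystem C ∧ T ⊆ C} = {C | insert topS T ⊆ C} := by
    ext C
    simp only [Set.mem_ofPred_eq, isClosureSystem_iff_mem_of_forall_le htop, Set.insert_subset_iff]
  have hcard : (insert topS T).ncard = (T \ {topS}).ncard + 1 := by
    rw [← Set.insert_sdiff_singleton, Set.ncard_insert_of_notMem (by simp)]
  rw [hsupersets, Set.ncard_setOf_superset, hcard, Nat.sub_sub, Nat.add_comm]

/-- In a finite nonempty chain with `n` elements and greatest element `⊤`, the
number of closure systems containing a given subset `T` is
`2 ^ (n - 1 - |T \ {⊤}|)`. -/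
theorem card_closureSystems_chain {α : Type*} [LinearOrder α] [Fintype α]
    [Nonempty α] (topS : α) (htop : ∀ x : α, x ≤ topS) (T : Set α) :
    {C : Set α | IsClosureSystem C ∧ T ⊆ C}.ncard =
      2 ^ (Fintype.card α - 1 - (T \ {topS}).ncard) :=
  card_closureSystems_chain_general topS htop T
end
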